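/- For every natural number n and positive integer k, Ch_n^{(k)}(x) = ∑_{ℓ=0}^{n} s₁(n,ℓ) · E_ℓ^{(k)}(x) as polynomials in ℚ[x], where E_ℓ^{(k)}(x) are the order-k Euler polynomials. -/

import Mathlib

open Finset Polynomial

/-- Signed Stirling numbers of the first kind. -/
def s1 : ℕ → ℕ → ℚ
  | 0, 0 => 1
  | 0, _ + 1 => 0
  | n + 1, 0 => -(n : ℚ) * s1 n 0
  | n + 1, l + 1 => s1 n l - (n : ℚ) * s1 n (l + 1)

/-- Stirling numbers of the second kind. -/
def S2 : ℕ → ℕ → ℚ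
  | 0, 0 => 1
  | 0, _ + 1 => 0
  | _ + 1, 0 => 0
  | n + 1, l + 1 => S2 n l + ((l : ℚ) + 1) * S2 n (l + 1)

/-- The binomial coefficient polynomial C(x, j) = x(x-1)⋯(x-j+1)/j!. -/
noncomputable def binPoly (j : ℕ) : Polynomial ℚ :=
  (j.factorial : ℚ)⁻¹ • descPochhammer ℚ j

/-- Order-k Changhee polynomials of the first kind. -/
noncomputable def ChP (k n : ℕ) : Polynomial ℚ :=
  ∑ i ∈ range (n + 1),
    Polynomial.C ((-1)^i * (n.factorial : ℚ) / 2^i * ((k + i - 1).choose i)) * binPoly (n - i)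

/-- Order-k Euler polynomials. -/
noncomputable def EP (k l : ℕ) : Polynomial ℚ :=
  ∑ i ∈ range (l + 1),
    Polynomial.C ((l.choose i : ℚ)) * Polynomial.X ^ (l - i) *
      Polynomial.C (∑ j ∈ range (i + 1),
        (-1/2 : ℚ)^j * ((k + j - 1).choose j) * (j.factorial : ℚ) * S2 i j)

lemma s1_zero_of_lt : ∀ {n l : ℕ}, n < l → s1 n l = 0
  | 0, l+1, _ => rfl
  | n+1, l+1, h => by
    rw [s1, s1_zero_of_lt (by omega), s1_zero_of_lt (by omega)]; ring

lemma S2_zero_of_lt : ∀ {n l : ℕ}, n < l → S2 n l = 0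
  | 0, l+1, _ => rfl
  | n+1, l+1, h => by
    rw [S2, S2_zero_of_lt (by omega), S2_zero_of_lt (by omega)]; ring

lemma descPoch_eq_sum (n : ℕ) :
    descPochhammer ℚ n = ∑ l ∈ range (n+1), Polynomial.C (s1 n l) * X ^ l := by
  induction n with
  | zero => simp [descPochhammer, s1]
  | succ n ih =>
    have hX : ((n : ℚ[X])) = Polynomial.C (n:ℚ) := by simp
    rw [descPochhammer_succ_right, ih, hX, mul_sub, Finset.sum_mul, Finset.sum_mul]
    have h1 : ∀ l, (Polynomial.C (s1 n l) * X ^ l) * X = Polynomial.C (s1 n l) * X ^ (l+1) := by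
      intro l; ring
    have h2 : ∀ l, (Polynomial.C (s1 n l) * X ^ l) * Polynomial.C (n:ℚ)
        = Polynomial.C ((n:ℚ) * s1 n l) * X ^ l := by
      intro l; rw [Polynomial.C_mul]; ring
    simp only [h1, h2]
    rw [Finset.sum_range_succ' (fun l => Polynomial.C (s1 (n+1) l) * X ^ l) (n+1)]
    rw [Finset.sum_range_succ' (fun l => Polynomial.C ((n:ℚ) * s1 n l) * X ^ l) n]
    have h3 : ∀ l, Polynomial.C (s1 (n+1) (l+1)) * X ^ (l+1)
        = Polynomial.C (s1 n l) * X ^ (l+1) - Polynomial.C ((n:ℚ) * s1 n (l+1)) * X ^ (l+1) := by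
      intro l; rw [show s1 (n+1) (l+1) = s1 n l - (n:ℚ) * s1 n (l+1) from rfl]
      rw [Polynomial.C_sub]; ring
    simp only [h3, Finset.sum_sub_distrib]
    have h4 : ∑ l ∈ range (n+1), Polynomial.C ((n:ℚ) * s1 n (l+1)) * X ^ (l+1)
        = ∑ l ∈ range n, Polynomial.C ((n:ℚ) * s1 n (l+1)) * X ^ (l+1) := by
      rw [Finset.sum_range_succ, s1_zero_of_lt (by omega)]
      simp
    rw [h4, show s1 (n+1) 0 = -(n:ℚ) * s1 n 0 from rfl]
    rw [Polynomial.C_mul, Polynomial.C_mul, Polynomial.C_neg]; ring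

lemma descPoch_coeff (m i : ℕ) : (descPochhammer ℚ m).coeff i = s1 m i := by
  rw [descPoch_eq_sum, Polynomial.finset_sum_coeff]
  simp only [Polynomial.coeff_C_mul, Polynomial.coeff_X_pow]
  rcases le_or_gt i m with h | h
  · rw [Finset.sum_eq_single i]
    · simp
    · intro b _ hb; rw [if_neg (fun h => hb h.symm), mul_zero]
    · intro hi; exact absurd (Finset.mem_range.2 (by omega)) hi
  · rw [Finset.sum_eq_zero, (s1_zero_of_lt h).symm]
    intro b hb
    have hbi : ¬ (i = b) := by have := Finset.mem_range.1 hb; omega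
    rw [if_neg hbi, mul_zero]

lemma S2_succ_left (i j : ℕ) :
    S2 (i+1) j = (if j = 0 then 0 else S2 i (j-1)) + (j:ℚ) * S2 i j := by
  match j with
  | 0 => simp [S2]
  | j+1 => rw [S2]; push_cast; ring

lemma stirling_orth (m j : ℕ) :
    ∑ i ∈ range (m+1), s1 m i * S2 i j = if m = j then 1 else 0 := by
  induction m generalizing j with
  | zero =>
    rw [Finset.sum_range_one]
    match j with
    | 0 => norm_num [show s1 0 0 = 1 from rfl, show S2 0 0 = 1 from rfl]
    | j+1 => rw [S2_zero_of_lt (by omega), mul_zero, if_neg (by omega)]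
  | succ m ih =>
    rw [Finset.sum_range_succ' (fun i => s1 (m+1) i * S2 i j) (m+1)]
    have e1 : ∀ i, s1 (m+1) (i+1) = s1 m i - (m:ℚ) * s1 m (i+1) := fun i => rfl
    have e0 : s1 (m+1) 0 = -(m:ℚ) * s1 m 0 := rfl
    simp only [e1, e0, sub_mul]
    rw [Finset.sum_sub_distrib]
    have key1 : ∑ i ∈ range (m+1), s1 m i * S2 (i+1) j
        = (if j = 0 then 0 else ∑ i ∈ range (m+1), s1 m i * S2 i (j-1))
          + (j:ℚ) * ∑ i ∈ range (m+1), s1 m i * S2 i j := by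
      simp only [S2_succ_left, mul_add, Finset.sum_add_distrib, Finset.mul_sum]
      congr 1
      · split <;> simp [Finset.sum_congr]
      · exact Finset.sum_congr rfl (fun i _ => by ring)
    have key2 : ∑ i ∈ range (m+1), (m:ℚ) * s1 m (i+1) * S2 (i+1) j
        = (m:ℚ) * ∑ i ∈ range (m+1), s1 m i * S2 i j - (m:ℚ) * s1 m 0 * S2 0 j := by
      have h5 : ∑ i ∈ range (m+2), (m:ℚ) * s1 m i * S2 i j
          = ∑ i ∈ range (m+1), (m:ℚ) * s1 m (i+1) * S2 (i+1) j + (m:ℚ) * s1 m 0 * S2 0 j := by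
        rw [Finset.sum_range_succ' (fun i => (m:ℚ) * s1 m i * S2 i j) (m+1)]
      have h6 : ∑ i ∈ range (m+2), (m:ℚ) * s1 m i * S2 i j
          = (m:ℚ) * ∑ i ∈ range (m+1), s1 m i * S2 i j := by
        rw [Finset.sum_range_succ _ (m+1), s1_zero_of_lt (Nat.lt_succ_self m), Finset.mul_sum]
        rw [mul_zero, zero_mul, add_zero]
        exact Finset.sum_congr rfl (fun i _ => by ring)
      rw [← h6, h5]; ring
    rw [key1, key2, ih j]
    match j with
    | 0 =>
      have hS : S2 0 0 = 1 := rfl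
      rw [hS]
      by_cases hm : m = 0
      · subst hm; simp
      · simp only [hm, if_false, if_true, Nat.succ_ne_zero, reduceIte]; push_cast; ring
    | j+1 =>
      have hS : S2 0 (j+1) = 0 := rfl
      rw [if_neg (Nat.succ_ne_zero j), Nat.add_sub_cancel, ih j, hS]
      by_cases h1 : m = j
      · subst h1
        simp only [if_pos rfl, show m + 1 ≠ m from by omega, if_false,
          show m ≠ m + 1 from by omega, reduceIte]
        push_cast; ring
      · by_cases h2 : m = j+1
        · subst h2
          simp only [h1, if_false, if_pos rfl, show j+1+1 ≠ j+1 from by omega, reduceIte]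
          push_cast; ring
        · simp only [h1, h2, if_false, show m+1 ≠ j+1 from by omega, reduceIte]
          push_cast; ring

lemma vandermonde_dp (x : ℚ) (n : ℕ) :
    (descPochhammer ℚ n).comp (Polynomial.C x + X) =
      ∑ m ∈ range (n+1),
        Polynomial.C ((n.choose m : ℚ) * (descPochhammer ℚ (n-m)).eval x) * descPochhammer ℚ m := by
  induction n with
  | zero => simp [descPochhammer]
  | succ n ih =>
    rw [descPochhammer_succ_right, mul_comp, ih, sub_comp, X_comp, natCast_comp, Finset.sum_mul]
    have step : ∀ m ∈ range (n+1),
        (Polynomial.C ((n.choose m : ℚ) * (descPochhammer ℚ (n-m)).eval x) * descPochhammer ℚ m)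
          * (Polynomial.C x + X - (n : ℚ[X])) =
        Polynomial.C ((n.choose m : ℚ) * (descPochhammer ℚ (n-m)).eval x) * descPochhammer ℚ (m+1)
        + Polynomial.C ((n.choose m : ℚ) * (descPochhammer ℚ (n+1-m)).eval x) * descPochhammer ℚ m := by
      intro m hm
      have hmn : m ≤ n := by have := Finset.mem_range.1 hm; omega
      have e1 : descPochhammer ℚ (m+1) = descPochhammer ℚ m * (X - (m:ℚ[X])) := by
        rw [descPochhammer_succ_right]
      have e2 : (descPochhammer ℚ (n+1-m)).eval x
          = (descPochhammer ℚ (n-m)).eval x * (x - ((n:ℚ) - m)) := by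
        rw [show n+1-m = (n-m)+1 from by omega, descPochhammer_succ_eval]
        congr 2
        push_cast [hmn]
        ring
      rw [e1, e2]
      have hn : ((n : ℚ[X])) = Polynomial.C (n:ℚ) := by simp
      have hmc : ((m : ℚ[X])) = Polynomial.C (m:ℚ) := by simp
      rw [hn, hmc]
      simp only [Polynomial.C_mul, Polynomial.C_sub]
      ring
    rw [Finset.sum_congr rfl step, Finset.sum_add_distrib]
    rw [Finset.sum_range_succ' (fun m =>
      Polynomial.C (((n+1).choose m : ℚ) * (descPochhammer ℚ (n+1-m)).eval x)
        * descPochhammer ℚ m) (n+1)]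
    have split1 : ∀ m ∈ range (n+1),
        Polynomial.C (((n+1).choose (m+1) : ℚ) * (descPochhammer ℚ (n+1-(m+1))).eval x)
          * descPochhammer ℚ (m+1)
        = Polynomial.C ((n.choose m : ℚ) * (descPochhammer ℚ (n-m)).eval x) * descPochhammer ℚ (m+1)
          + Polynomial.C ((n.choose (m+1) : ℚ) * (descPochhammer ℚ (n-m)).eval x)
            * descPochhammer ℚ (m+1) := by
      intro m hm
      rw [show n+1-(m+1) = n-m from by omega, Nat.choose_succ_succ]
      push_cast
      simp only [Polynomial.C_mul, Polynomial.C_add]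
      ring
    rw [Finset.sum_congr rfl split1, Finset.sum_add_distrib]
    have reix : ∑ m ∈ range (n+1),
        Polynomial.C ((n.choose m : ℚ) * (descPochhammer ℚ (n+1-m)).eval x) * descPochhammer ℚ m
        = ∑ m ∈ range (n+1),
            Polynomial.C ((n.choose (m+1) : ℚ) * (descPochhammer ℚ (n-m)).eval x)
              * descPochhammer ℚ (m+1)
          + Polynomial.C (((n.choose 0 : ℚ)) * (descPochhammer ℚ (n+1)).eval x)
            * descPochhammer ℚ 0 := by
      rw [Finset.sum_range_succ' (fun m =>
        Polynomial.C ((n.choose m : ℚ) * (descPochhammer ℚ (n+1-m)).eval x)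
          * descPochhammer ℚ m) n]
      congr 1
      · rw [Finset.sum_range_succ, Nat.choose_succ_self]
        simp only [Nat.cast_zero, zero_mul, Polynomial.C_0, zero_mul, add_zero]
        apply Finset.sum_congr rfl
        intro m hm
        rw [show n+1-(m+1) = n-m from by omega]
    rw [reix]
    simp [descPochhammer]
    ring

lemma stirling_orth' (n m j : ℕ) (h : m ≤ n) :
    ∑ i ∈ range (n+1), s1 m i * S2 i j = if m = j then 1 else 0 := by
  rw [← stirling_orth m j]
  symm
  apply Finset.sum_subset
  · intro i hi
    simp only [Finset.mem_range] at *
    omega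
  · intro i _ hi
    simp only [Finset.mem_range, not_lt] at hi
    rw [s1_zero_of_lt (by omega), zero_mul]

lemma T_eq (n i : ℕ) :
    ∑ l ∈ range (n+1), Polynomial.C (s1 n l * (l.choose i : ℚ)) * X ^ (l-i)
    = ∑ m ∈ range (n+1), Polynomial.C ((n.choose m : ℚ) * s1 m i) * descPochhammer ℚ (n-m) := by
  apply Polynomial.funext
  intro r
  have h := congrArg (fun p => Polynomial.coeff p i) (vandermonde_dp r n)
  have hA : ((descPochhammer ℚ n).comp (Polynomial.C r + X)).coeff i
      = ∑ l ∈ range (n+1), s1 n l * ((l.choose i : ℚ) * r^(l-i)) := by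
    rw [descPoch_eq_sum]
    have : (∑ l ∈ range (n+1), Polynomial.C (s1 n l) * X ^ l).comp (Polynomial.C r + X)
        = ∑ l ∈ range (n+1), Polynomial.C (s1 n l) * (X + Polynomial.C r) ^ l := by
      rw [Polynomial.sum_comp]
      apply Finset.sum_congr rfl
      intro l _
      rw [mul_comp, C_comp, pow_comp, X_comp, add_comm]
    rw [this, Polynomial.finset_sum_coeff]
    apply Finset.sum_congr rfl
    intro l _
    rw [Polynomial.coeff_C_mul, Polynomial.coeff_X_add_C_pow]
    ring
  have hB : (∑ m ∈ range (n+1),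
        Polynomial.C ((n.choose m : ℚ) * (descPochhammer ℚ (n-m)).eval r)
          * descPochhammer ℚ m).coeff i
      = ∑ m ∈ range (n+1), (n.choose m : ℚ) * (descPochhammer ℚ (n-m)).eval r * s1 m i := by
    rw [Polynomial.finset_sum_coeff]
    apply Finset.sum_congr rfl
    intro m _
    rw [Polynomial.coeff_C_mul, descPoch_coeff]
  rw [hA, hB] at h
  rw [Polynomial.eval_finset_sum, Polynomial.eval_finset_sum]
  simp only [Polynomial.eval_mul, Polynomial.eval_C, Polynomial.eval_pow, Polynomial.eval_X]
  rw [show ∑ l ∈ range (n+1), s1 n l * (l.choose i : ℚ) * r ^ (l-i)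
      = ∑ l ∈ range (n+1), s1 n l * ((l.choose i : ℚ) * r^(l-i)) from
    Finset.sum_congr rfl (fun l _ => by ring), h]
  apply Finset.sum_congr rfl
  intro m _
  ring

lemma KL (n j : ℕ) (hj : j ≤ n) :
    ∑ i ∈ range (n+1), Polynomial.C (S2 i j) *
      (∑ l ∈ range (n+1), Polynomial.C (s1 n l * (l.choose i : ℚ)) * X ^ (l-i))
    = Polynomial.C ((n.choose j : ℚ)) * descPochhammer ℚ (n-j) := by
  simp only [T_eq]
  have h1 : ∀ i ∈ range (n+1), Polynomial.C (S2 i j) *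
      (∑ m ∈ range (n+1), Polynomial.C ((n.choose m : ℚ) * s1 m i) * descPochhammer ℚ (n-m))
      = ∑ m ∈ range (n+1),
          Polynomial.C ((n.choose m : ℚ) * (s1 m i * S2 i j)) * descPochhammer ℚ (n-m) := by
    intro i _
    rw [Finset.mul_sum]
    apply Finset.sum_congr rfl
    intro m _
    rw [← mul_assoc, ← Polynomial.C_mul]
    congr 1
    ring
  rw [Finset.sum_congr rfl h1, Finset.sum_comm]
  have h2 : ∀ m ∈ range (n+1),
      ∑ i ∈ range (n+1),
        Polynomial.C ((n.choose m : ℚ) * (s1 m i * S2 i j)) * descPochhammer ℚ (n-m)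
      = Polynomial.C ((n.choose m : ℚ) * (if m = j then 1 else 0)) * descPochhammer ℚ (n-m) := by
    intro m hm
    rw [← Finset.sum_mul, ← map_sum Polynomial.C, ← Finset.mul_sum,
      stirling_orth' n m j (by have := Finset.mem_range.1 hm; omega)]
  rw [Finset.sum_congr rfl h2, Finset.sum_eq_single j]
  · rw [if_pos rfl, mul_one]
  · intro m _ hm
    rw [if_neg hm, mul_zero, Polynomial.C_0, zero_mul]
  · intro hj'
    exact absurd (Finset.mem_range.2 (by omega)) hj'

theorem changhee_poly_eq_stirling_euler_poly (n k : ℕ) (hk : 1 ≤ k) :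
    ChP k n = ∑ l ∈ range (n + 1), Polynomial.C (s1 n l) * EP k l := by
  set b : ℕ → ℚ := fun j => (-1/2 : ℚ)^j * (((k + j - 1).choose j : ℚ)) * (j.factorial : ℚ)
    with hb
  have lhs_eq : ChP k n = ∑ i ∈ range (n+1),
      Polynomial.C (b i * (n.choose i : ℚ)) * descPochhammer ℚ (n-i) := by
    rw [ChP]
    apply Finset.sum_congr rfl
    intro i hi
    have hin : i ≤ n := by have := Finset.mem_range.1 hi; omega
    rw [binPoly, Polynomial.smul_eq_C_mul, ← mul_assoc, ← Polynomial.C_mul]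
    congr 1
    rw [hb, Nat.cast_choose ℚ hin]
    have h1 : ((i.factorial : ℚ)) ≠ 0 := Nat.cast_ne_zero.2 i.factorial_ne_zero
    have h2 : (((n-i).factorial : ℚ)) ≠ 0 := Nat.cast_ne_zero.2 (n-i).factorial_ne_zero
    field_simp
    congr 1
    rw [neg_pow (1/2 : ℚ) i, div_pow, one_pow]
    ring
  have rhs_eq : ∀ l ∈ range (n+1), Polynomial.C (s1 n l) * EP k l
      = ∑ i ∈ range (n+1), ∑ j ∈ range (n+1),
          Polynomial.C (b j) * (Polynomial.C (S2 i j)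
            * (Polynomial.C (s1 n l * (l.choose i : ℚ)) * X^(l-i))) := by
    intro l hl
    have hln : l ≤ n := by have := Finset.mem_range.1 hl; omega
    rw [EP, Finset.mul_sum]
    have hzero : ∀ i ∈ range (n+1), i ∉ range (l+1) →
        Polynomial.C (s1 n l) * (Polynomial.C ((l.choose i : ℚ)) * X ^ (l - i) *
          Polynomial.C (∑ j ∈ range (i + 1),
            (-1/2 : ℚ)^j * (((k + j - 1).choose j : ℚ)) * (j.factorial : ℚ) * S2 i j)) = 0 := by
      intro i _ hi
      have : l < i := by simp only [Finset.mem_range, not_lt] at hi; omega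
      rw [Nat.choose_eq_zero_of_lt this]
      simp
    rw [Finset.sum_subset (Finset.range_subset_range.2 (by omega : l+1 ≤ n+1)) hzero]
    apply Finset.sum_congr rfl
    intro i hi
    have hin : i ≤ n := by have := Finset.mem_range.1 hi; omega
    have hA : (∑ j ∈ range (i + 1),
          (-1/2 : ℚ)^j * (((k + j - 1).choose j : ℚ)) * (j.factorial : ℚ) * S2 i j)
        = ∑ j ∈ range (n+1), b j * S2 i j := by
      apply Finset.sum_subset (Finset.range_subset_range.2 (by omega : i+1 ≤ n+1))
      intro j _ hj
      have : i < j := by simp only [Finset.mem_range, not_lt] at hj; omega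
      rw [S2_zero_of_lt this, mul_zero]
    rw [hA, map_sum Polynomial.C, Finset.mul_sum, Finset.mul_sum]
    apply Finset.sum_congr rfl
    intro j _
    simp only [Polynomial.C_mul]
    ring
  rw [Finset.sum_congr rfl rhs_eq, Finset.sum_comm, lhs_eq]
  have swap2 : ∀ i ∈ range (n+1),
      ∑ l ∈ range (n+1), ∑ j ∈ range (n+1),
        Polynomial.C (b j) * (Polynomial.C (S2 i j)
          * (Polynomial.C (s1 n l * (l.choose i : ℚ)) * X^(l-i)))
      = ∑ j ∈ range (n+1), Polynomial.C (b j) * (Polynomial.C (S2 i j)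
          * (∑ l ∈ range (n+1), Polynomial.C (s1 n l * (l.choose i : ℚ)) * X^(l-i))) := by
    intro i _
    rw [Finset.sum_comm]
    apply Finset.sum_congr rfl
    intro j _
    rw [Finset.mul_sum, Finset.mul_sum]
  rw [Finset.sum_congr rfl swap2, Finset.sum_comm]
  apply Finset.sum_congr rfl
  intro j hj
  have hjn : j ≤ n := by have := Finset.mem_range.1 hj; omega
  have : ∑ i ∈ range (n+1), Polynomial.C (b j) * (Polynomial.C (S2 i j)
      * (∑ l ∈ range (n+1), Polynomial.C (s1 n l * (l.choose i : ℚ)) * X^(l-i)))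
      = Polynomial.C (b j) * (∑ i ∈ range (n+1), Polynomial.C (S2 i j)
        * (∑ l ∈ range (n+1), Polynomial.C (s1 n l * (l.choose i : ℚ)) * X^(l-i))) := by
    rw [Finset.mul_sum]
  rw [this, KL n j hjn, ← mul_assoc, ← Polynomial.C_mul]
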